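/- If G1 and G2 are planar 3-trees sharing exactly one edge ab (and its endpoints), where ab lies on the outer face triangle abc of G1 and on a face triangle abx of G2, then the union of G1 and G2 together with the additional edge xc is a planar 3-tree. -/

import Mathlib

open SimpleGraph

/-- A finite-style graph: a subgraph of the complete graph on `ℕ`,
i.e. a graph together with its vertex set `verts ⊆ ℕ`. -/
abbrev FGraph := SimpleGraph.Subgraph (⊤ : SimpleGraph ℕ)

/-- The complete graph on the vertex set `s`. -/
def cliqueGraph (s : Finset ℕ) : FGraph where
  verts := ↑s
  Adj u v := u ∈ s ∧ v ∈ s ∧ u ≠ v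
  adj_sub h := h.2.2
  edge_vert h := h.1
  symm := ⟨fun u v h => ⟨h.2.1, h.1, h.2.2.symm⟩⟩

/-- Add a new vertex `v` to `G`, joined to the vertices of `s` (which are in `G`). -/
def addVertex (G : FGraph) (v : ℕ) (s : Finset ℕ) : FGraph where
  verts := insert v G.verts
  Adj x y := G.Adj x y ∨ (x = v ∧ y ≠ v ∧ y ∈ s ∧ y ∈ G.verts)
    ∨ (y = v ∧ x ≠ v ∧ x ∈ s ∧ x ∈ G.verts)
  adj_sub h := by
    rcases h with h | h | h
    · exact G.adj_sub h
    · exact fun e => h.2.1 (by rw [← e, h.1])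
    · exact fun e => h.2.1 (by rw [e, h.1])
  edge_vert h := by
    rcases h with h | h | h
    · exact Set.mem_insert_of_mem _ (G.edge_vert h)
    · exact h.1 ▸ Set.mem_insert _ _
    · exact Set.mem_insert_of_mem _ h.2.2.2
  symm := ⟨fun x y h => by
    rcases h with h | h | h
    · exact Or.inl (G.adj_symm h)
    · exact Or.inr (Or.inr h)
    · exact Or.inr (Or.inl h)⟩

/-- `s` is a clique (of pairwise adjacent vertices) in `G`. -/
def IsCliqueIn (G : FGraph) (s : Finset ℕ) : Prop :=
  ↑s ⊆ G.verts ∧ ∀ u ∈ s, ∀ v ∈ s, u ≠ v → G.Adj u v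

/-- `k`-trees: start from a `k`-clique and repeatedly add a vertex joined to an
existing `k`-clique. -/
inductive IsKTree (k : ℕ) : FGraph → Prop
  | base (s : Finset ℕ) (hs : s.card = k) : IsKTree k (cliqueGraph s)
  | grow (G : FGraph) (hG : IsKTree k G) (s : Finset ℕ) (hs : s.card = k)
      (hclique : IsCliqueIn G s) (v : ℕ) (hv : v ∉ G.verts) :
      IsKTree k (addVertex G v s)

/-- A partial `k`-tree is a subgraph of a `k`-tree. -/
def IsPartialKTree (k : ℕ) (G : FGraph) : Prop := ∃ H : FGraph, IsKTree k H ∧ G ≤ H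

/-- Add the single edge `uv` (and its endpoints) to `G`. -/
def addEdge (G : FGraph) (u v : ℕ) : FGraph where
  verts := insert u (insert v G.verts)
  Adj x y := G.Adj x y ∨ (x = u ∧ y = v ∧ u ≠ v) ∨ (x = v ∧ y = u ∧ u ≠ v)
  adj_sub h := by
    rcases h with h | h | h
    · exact G.adj_sub h
    · exact fun e => h.2.2 (by rw [← h.1, ← h.2.1, e])
    · exact fun e => h.2.2 (by rw [← h.1, ← h.2.1, e])
  edge_vert h := by
    rcases h with h | h | h
    · exact Set.mem_insert_of_mem _ (Set.mem_insert_of_mem _ (G.edge_vert h))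
    · exact h.1 ▸ Set.mem_insert _ _
    · exact h.1 ▸ Set.mem_insert_of_mem _ (Set.mem_insert _ _)
  symm := ⟨fun x y h => by
    rcases h with h | h | h
    · exact Or.inl (G.adj_symm h)
    · exact Or.inr (Or.inr ⟨h.2.1, h.1, h.2.2⟩)
    · exact Or.inr (Or.inl ⟨h.2.1, h.1, h.2.2⟩)⟩

/-- `G` is a minor of `H`: there are pairwise disjoint nonempty connected branch sets
in `H`, one for each vertex of `G`, with an `H`-edge between the branch sets of any
two `G`-adjacent vertices. -/
def IsMinor (G H : FGraph) : Prop :=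
  ∃ β : ℕ → Finset ℕ,
    (∀ u ∈ G.verts, (β u).Nonempty ∧ ↑(β u) ⊆ H.verts ∧ (H.induce ↑(β u)).coe.Connected) ∧
    (∀ u ∈ G.verts, ∀ v ∈ G.verts, u ≠ v → Disjoint (β u) (β v)) ∧
    (∀ u v, G.Adj u v → ∃ x ∈ β u, ∃ y ∈ β v, H.Adj x y)

/-- The complete graph `K₅`. -/
def K5g : FGraph := cliqueGraph {0, 1, 2, 3, 4}

/-- The complete bipartite graph `K₃,₃` with parts `{0,1,2}` and `{3,4,5}`. -/
def K33g : FGraph where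
  verts := {n : ℕ | n < 6}
  Adj u v := (u < 3 ∧ 3 ≤ v ∧ v < 6) ∨ (v < 3 ∧ 3 ≤ u ∧ u < 6)
  adj_sub := fun {u v} h => by rcases h with h | h <;> exact show u ≠ v by omega
  edge_vert := fun {u v} h => by rcases h with h | h <;> exact show u < 6 by omega
  symm := ⟨fun u v h => by tauto⟩

/-- Planarity via Wagner's theorem: no `K₅` and no `K₃,₃` minor. -/
def Planar (G : FGraph) : Prop := ¬ IsMinor K5g G ∧ ¬ IsMinor K33g G

/-- In a maximal planar graph (planar triangulation), the triangle `abc` bounds a face: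
combinatorially, a new vertex can be placed inside it and joined to `a`, `b`, `c`
while preserving planarity. -/
def IsFaceTriangle (G : FGraph) (a b c : ℕ) : Prop :=
  G.Adj a b ∧ G.Adj b c ∧ G.Adj a c ∧
  ∀ v, v ∉ G.verts → Planar (addVertex G v {a, b, c})

/-- A perfect elimination scheme witnessing that `H` is a `k`-tree: a listing of the
vertices of `H` whose first `k` entries form a clique and each later entry has exactly
`k` earlier neighbours, which form a clique. -/
def IsPESk (k : ℕ) (l : List ℕ) (H : FGraph) : Prop :=
  l.Nodup ∧ H.verts = {v | v ∈ l} ∧ k ≤ l.length ∧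
  (∀ i j : Fin l.length, (i : ℕ) < k → (j : ℕ) < k → i ≠ j → H.Adj (l.get i) (l.get j)) ∧
  (∀ i : Fin l.length, k ≤ (i : ℕ) →
    ∃ s : Finset (Fin l.length), s.card = k ∧ (∀ j ∈ s, (j : ℕ) < (i : ℕ)) ∧
      (∀ a ∈ s, ∀ b ∈ s, a ≠ b → H.Adj (l.get a) (l.get b)) ∧
      (∀ j : Fin l.length, (j : ℕ) < (i : ℕ) → (H.Adj (l.get j) (l.get i) ↔ j ∈ s)))

/-- A vertex is simplicial if its neighbourhood induces a clique. -/
def IsSimplicial (G : FGraph) (v : ℕ) : Prop :=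
  v ∈ G.verts ∧ ∀ u w, G.Adj v u → G.Adj v w → u ≠ w → G.Adj u w

/-- A graph is chordal if it has no induced cycle of length greater than 3. -/
def IsChordal (G : FGraph) : Prop :=
  ∀ n : ℕ, 4 ≤ n → ¬ ∃ f : Fin n → ℕ, Function.Injective f ∧ (∀ i, f i ∈ G.verts) ∧
    ∀ i j : Fin n, G.Adj (f i) (f j) ↔ ((i : ℕ) + 1) % n = (j : ℕ) ∨ ((j : ℕ) + 1) % n = (i : ℕ)

/-- A (general) perfect elimination scheme: an ordering of the vertices such that each
vertex is simplicial in the subgraph induced by it and the earlier vertices. -/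
def IsPES (l : List ℕ) (G : FGraph) : Prop :=
  l.Nodup ∧ G.verts = {v | v ∈ l} ∧
  ∀ i : Fin l.length, IsSimplicial (G.induce {v | v ∈ l.take ((i : ℕ) + 1)}) (l.get i)

/-- `G` can be reduced to the empty graph by repeatedly deleting simplicial vertices. -/
inductive Reducible : FGraph → Prop
  | empty (G : FGraph) (h : G.verts = ∅) : Reducible G
  | delete (G : FGraph) (v : ℕ) (hv : IsSimplicial G v)
      (h : Reducible (G.deleteVerts {v})) : Reducible G

/-- `G` is 3-connected: at least 4 vertices, and deleting any two vertices leaves it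
connected. -/
def ThreeConnected (G : FGraph) : Prop :=
  4 ≤ G.verts.ncard ∧ ∀ S : Finset ℕ, S.card ≤ 2 → (G.deleteVerts ↑S).Connected

/-- `G` has a tree decomposition of width at most `k`. -/
def HasTreewidthLE (G : FGraph) (k : ℕ) : Prop :=
  ∃ (ι : Type) (T : SimpleGraph ι) (B : ι → Finset ℕ),
    T.Connected ∧ T.IsAcyclic ∧
    (∀ v ∈ G.verts, ∃ i, v ∈ B i) ∧
    (∀ u v, G.Adj u v → ∃ i, u ∈ B i ∧ v ∈ B i) ∧
    (∀ v ∈ G.verts, (SimpleGraph.induce {i | v ∈ B i} T).Connected) ∧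
    (∀ i, (B i).card ≤ k + 1)

/-- `G` is acyclic (a forest). -/
def AcyclicFG (G : FGraph) : Prop := G.coe.IsAcyclic

/-- `G` is a complete graph on its vertex set. -/
def CompleteFG (G : FGraph) : Prop := ∀ u ∈ G.verts, ∀ v ∈ G.verts, u ≠ v → G.Adj u v

/-- The path on the three vertices `0, 1, 2`. -/
def P3 : FGraph := addEdge (addEdge (cliqueGraph ∅) 0 1) 1 2


/-!
Put a new vertex `x` into the face `abc` of `G1`: this gives a 3-tree `W₁`. Since a 3-tree can
be regrown from any of its triangles, `G2` can be grown from `abx`, and replaying those steps on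
`W₁` shows that `W₁ ∪ G2 = G1 ∪ G2 + xc` is a 3-tree.

For planarity, `G1 ∪ G2 + xc` is also `W₁ ∪ W₂`, where `W₂` puts `c` into the face `abx` of `G2`:
two planar graphs glued along the clique `{a, b, c, x}`, in which `x` has no neighbour in
`W₁ - W₂` and `c` none in `W₂ - W₁`. A `K₅`- or `K₃,₃`-model in the union projects to a model in
`W₁` or in `W₂` unless some branch set lies inside `W₂ - W₁` and another inside `W₁ - W₂`. For
`K₅` these two would have to be adjacent, which is impossible. For `K₃,₃` they lie in one part,
and the three branch sets of the other part must cover `{a, b, c, x}`; the third branch set of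
the first part then lies on one side, say in `W₁`, and replacing the branch set in `W₂ - W₁`
by `{x}` yields a `K₃,₃`-minor of `W₁`.
-/

/-! ### Regrowing a `k`-tree from any of its `k`-cliques -/

inductive IsKTreeFrom (k : ℕ) (s : Finset ℕ) : FGraph → Prop
  | base : IsKTreeFrom k s (cliqueGraph s)
  | grow (G : FGraph) (hG : IsKTreeFrom k s G) (t : Finset ℕ) (ht : t.card = k)
      (hclique : IsCliqueIn G t) (v : ℕ) (hv : v ∉ G.verts) :
      IsKTreeFrom k s (addVertex G v t)

theorem IsKTreeFrom.coe_subset_verts {k : ℕ} {s : Finset ℕ} {G : FGraph}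
    (h : IsKTreeFrom k s G) : ↑s ⊆ G.verts := by
  induction h with
  | base => exact subset_rfl
  | grow G _ _ _ _ v _ ih => exact ih.trans (Set.subset_insert v G.verts)

theorem IsCliqueIn.mono {G H : FGraph} {s : Finset ℕ} (h : IsCliqueIn G s) (hGH : G ≤ H) :
    IsCliqueIn H s :=
  ⟨h.1.trans hGH.1, fun u hu v hv huv => hGH.2 (h.2 u hu v hv huv)⟩

theorem IsCliqueIn.pairwise {G : FGraph} {s : Finset ℕ} (h : IsCliqueIn G s) :
    (↑s : Set ℕ).Pairwise G.Adj :=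
  fun p hp q hq => h.2 p hp q hq

theorem IsCliqueIn.subset {G : FGraph} {s t : Finset ℕ} (h : IsCliqueIn G s) (hts : t ⊆ s) :
    IsCliqueIn G t :=
  ⟨(Finset.coe_subset.2 hts).trans h.1, fun p hp q hq => h.2 p (hts hp) q (hts hq)⟩

theorem isCliqueIn_triangle {G : FGraph} {a b c : ℕ} (hab : G.Adj a b) (hbc : G.Adj b c)
    (hac : G.Adj a c) : IsCliqueIn G {a, b, c} := by
  refine ⟨fun p hp => ?_, fun p hp q hq hpq => ?_⟩
  · simp only [Finset.coe_insert, Finset.coe_singleton, Set.mem_insert_iff,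
      Set.mem_singleton_iff] at hp
    rcases hp with rfl | rfl | rfl
    exacts [G.edge_vert hab, G.edge_vert hbc, G.edge_vert hac.symm]
  · simp only [Finset.mem_insert, Finset.mem_singleton] at hp hq
    rcases hp with rfl | rfl | rfl <;> rcases hq with rfl | rfl | rfl <;>
      first | exact absurd rfl hpq | assumption | exact G.adj_symm ‹_›

theorem IsCliqueIn.addVertex {G : FGraph} {s : Finset ℕ} (h : IsCliqueIn G s) {v : ℕ}
    (hv : v ∉ G.verts) : IsCliqueIn (addVertex G v s) (insert v s) := by
  have hvs : ∀ p ∈ s, p ≠ v := fun p hp e => hv (e ▸ h.1 hp)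
  refine ⟨by rw [Finset.coe_insert]; exact Set.insert_subset_insert h.1,
    fun p hp q hq hpq => ?_⟩
  rcases Finset.mem_insert.1 hp with rfl | hp' <;> rcases Finset.mem_insert.1 hq with rfl | hq'
  · exact absurd rfl hpq
  · exact Or.inr (Or.inl ⟨rfl, hvs q hq', hq', h.1 hq'⟩)
  · exact Or.inr (Or.inr ⟨rfl, hvs p hp', hp', h.1 hp'⟩)
  · exact Or.inl (h.2 p hp' q hq' hpq)

theorem le_addVertex (G : FGraph) (v : ℕ) (s : Finset ℕ) : G ≤ addVertex G v s :=
  ⟨Set.subset_insert v G.verts, fun _ _ h => Or.inl h⟩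

theorem addVertex_cliqueGraph {s : Finset ℕ} {v : ℕ} (hv : v ∉ s) :
    addVertex (cliqueGraph s) v s = cliqueGraph (insert v s) := by
  ext p q
  · simp [addVertex, cliqueGraph]
  · simp only [addVertex, cliqueGraph, Finset.mem_insert, Finset.mem_coe]
    grind

theorem addVertex_comm {G : FGraph} {v w : ℕ} {s t : Finset ℕ}
    (hs : ↑s ⊆ G.verts) (ht : ↑t ⊆ G.verts) (hv : v ∉ G.verts) (hw : w ∉ G.verts) :
    addVertex (addVertex G w t) v s = addVertex (addVertex G v s) w t := by
  have hvt : v ∉ t := fun h => hv (ht h)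
  have hws : w ∉ s := fun h => hw (hs h)
  ext p q
  · exact Set.ext_iff.1 (Set.insert_comm v w G.verts) p
  · simp only [addVertex, Set.mem_insert_iff]
    grind

theorem IsKTreeFrom.addVertex_of_subset {k : ℕ} {s t : Finset ℕ} {G : FGraph} {v : ℕ}
    (h : IsKTreeFrom k s G) (hv : v ∉ G.verts) (hs : s.card = k) (ht : t.card = k)
    (hts : t ⊆ insert v s) : IsKTreeFrom k t (addVertex G v s) := by
  induction h with
  | base =>
    have hvs : v ∉ s := hv
    obtain ⟨u, hu⟩ : ∃ u, insert v s \ t = {u} := by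
      apply Finset.card_eq_one.1
      rw [Finset.card_sdiff_of_subset hts, Finset.card_insert_of_notMem hvs, hs, ht]
      simp
    have hut : u ∉ t := (Finset.mem_sdiff.1 (hu ▸ Finset.mem_singleton_self u)).2
    have hins : insert u t = insert v s := by
      rw [← Finset.sdiff_union_of_subset hts, hu, Finset.insert_eq]
    rw [addVertex_cliqueGraph hvs, ← hins, ← addVertex_cliqueGraph hut]
    exact .grow _ .base t ht ⟨subset_rfl, fun p hp q hq hpq => ⟨hp, hq, hpq⟩⟩ u hut
  | grow G hG t' ht' hclique w hw ih =>
    have hvG : v ∉ G.verts := fun h => hv (Set.mem_insert_of_mem _ h)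
    rw [addVertex_comm hG.coe_subset_verts hclique.1 hvG hw]
    refine .grow _ (ih hvG) t' ht' (hclique.mono (le_addVertex G v s)) w ?_
    rintro (rfl | h)
    · exact hv (Set.mem_insert _ _)
    · exact hw h

theorem IsKTree.isKTreeFrom {k : ℕ} {G : FGraph} (h : IsKTree k G) {t : Finset ℕ}
    (ht : t.card = k) (htG : IsCliqueIn G t) : IsKTreeFrom k t G := by
  induction h generalizing t with
  | base s hs =>
    obtain rfl : t = s :=
      Finset.eq_of_subset_of_card_le (Finset.coe_subset.1 htG.1) (by omega)
    exact .base
  | grow G _ s hs hclique v hv ih =>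
    by_cases hvt : v ∈ t
    · refine (ih hs hclique).addVertex_of_subset hv hs ht fun p hp => ?_
      rcases eq_or_ne p v with rfl | hpv
      · exact Finset.mem_insert_self p s
      · rcases htG.2 v hvt p hp hpv.symm with h | h | h
        · exact absurd (G.edge_vert h) hv
        · exact Finset.mem_insert_of_mem h.2.2.1
        · exact absurd h.1 hpv
    · refine .grow G (ih ht ⟨fun p hp => ?_, fun p hp q hq hpq => ?_⟩) s hs hclique v hv
      · rcases htG.1 hp with rfl | h
        · exact absurd hp hvt
        · exact h
      · rcases htG.2 p hp q hq hpq with h | h | h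
        · exact h
        · exact absurd (h.1 ▸ hp) hvt
        · exact absurd (h.1 ▸ hq) hvt

theorem sup_cliqueGraph_of_isCliqueIn {F : FGraph} {s : Finset ℕ} (hs : IsCliqueIn F s) :
    F ⊔ cliqueGraph s = F :=
  sup_eq_left.2 ⟨hs.1, fun p q h => hs.2 p h.1 q h.2.1 h.2.2⟩

theorem sup_addVertex {F G : FGraph} {v : ℕ} {t : Finset ℕ} (htG : ↑t ⊆ G.verts) :
    F ⊔ addVertex G v t = addVertex (F ⊔ G) v t := by
  ext p q
  · simp only [addVertex, Subgraph.verts_sup, Set.mem_union, Set.mem_insert_iff]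
    tauto
  · have := @htG p
    have := @htG q
    simp only [addVertex, Subgraph.sup_adj, Subgraph.verts_sup, Set.mem_union,
      Finset.mem_coe] at *
    grind

theorem IsKTreeFrom.sup {k : ℕ} {s : Finset ℕ} {G : FGraph} (hG : IsKTreeFrom k s G)
    {F : FGraph} (hF : IsKTree k F) (hs : IsCliqueIn F s) (hFG : F.verts ∩ G.verts = ↑s) :
    IsKTree k (F ⊔ G) := by
  induction hG with
  | base => rwa [sup_cliqueGraph_of_isCliqueIn hs]
  | grow G hG t ht hclique v hv ih =>
    have hvF : v ∉ F.verts := fun hvF =>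
      hv (hG.coe_subset_verts (hFG ▸ ⟨hvF, Set.mem_insert v G.verts⟩))
    rw [sup_addVertex hclique.1]
    refine .grow _ (ih ?_) t ht (hclique.mono le_sup_right) v ?_
    · refine Set.Subset.antisymm (fun y hy => hFG.subset ⟨hy.1, Set.mem_insert_of_mem v hy.2⟩) ?_
      exact Set.subset_inter hs.1 hG.coe_subset_verts
    · rintro (h | h)
      · exact hvF h
      · exact hv h

theorem IsKTree.sup {k : ℕ} {F G : FGraph} (hF : IsKTree k F) (hG : IsKTree k G) {s : Finset ℕ}
    (hs : s.card = k) (hsF : IsCliqueIn F s) (hsG : IsCliqueIn G s)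
    (hFG : F.verts ∩ G.verts = ↑s) : IsKTree k (F ⊔ G) :=
  (hG.isKTreeFrom hs hsG).sup hF hsF hFG

namespace SimpleGraph

variable {V : Type*} {G : SimpleGraph V} {s t : Set V}

theorem subset_of_preconnected_induce (hs : (G.induce s).Preconnected) {u : V} (hu : u ∈ s ∩ t)
    (hst : ∀ p ∈ s ∩ t, ∀ q ∈ s, G.Adj p q → q ∈ t) : s ⊆ t := by
  have key : ∀ (p q : s) (w : (G.induce s).Walk p q), (p : V) ∈ t → (q : V) ∈ t := by
    intro p q w
    induction w with
    | nil => exact id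
    | cons h _ ih => exact fun hp => ih (hst _ ⟨Subtype.prop _, hp⟩ _ (Subtype.prop _) h)
  intro v hv
  obtain ⟨w⟩ := hs ⟨u, hu.1⟩ ⟨v, hv⟩
  exact key _ _ w hu.2

theorem connected_induce_inter (hs : (G.induce s).Connected) {c : Set V} (hsc : (s ∩ c).Nonempty)
    (hct : c ⊆ t) (hc : c.Pairwise G.Adj)
    (hst : ∀ p ∈ s ∩ t, p ∉ c → ∀ q ∈ s, G.Adj p q → q ∈ t) :
    (G.induce (s ∩ t)).Connected := by
  -- a walk inside `s` from a vertex of `t` stays in `t` until it first meets the clique `c`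
  have key : ∀ (p q : s) (w : (G.induce s).Walk p q), (q : V) ∈ c → ∀ hp : (p : V) ∈ t,
      ∃ z, ∃ hz : z ∈ s ∩ t, z ∈ c ∧ (G.induce (s ∩ t)).Reachable ⟨p, p.2, hp⟩ ⟨z, hz⟩ := by
    intro p q w hq
    induction w with
    | nil => exact fun hp => ⟨_, ⟨Subtype.prop _, hp⟩, hq, .rfl⟩
    | @cons p r _ h _ ih =>
      intro hp
      by_cases hpc : (p : V) ∈ c
      · exact ⟨_, ⟨p.2, hp⟩, hpc, .rfl⟩
      · have hr : (r : V) ∈ t := hst _ ⟨p.2, hp⟩ hpc _ r.2 h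
        obtain ⟨z, hz, hzc, hrz⟩ := ih hq hr
        exact ⟨z, hz, hzc,
          (show (G.induce (s ∩ t)).Adj ⟨p, p.2, hp⟩ ⟨r, r.2, hr⟩ from h).reachable.trans hrz⟩
  obtain ⟨z₀, hz₀s, hz₀c⟩ := hsc
  rw [connected_iff_exists_forall_reachable]
  refine ⟨⟨z₀, hz₀s, hct hz₀c⟩, fun ⟨p, hps, hpt⟩ => ?_⟩
  obtain ⟨w⟩ := hs.preconnected ⟨p, hps⟩ ⟨z₀, hz₀s⟩
  obtain ⟨z, hz, hzc, hpz⟩ := key _ _ w hz₀c hpt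
  refine Reachable.symm (hpz.trans ?_)
  rcases eq_or_ne z z₀ with rfl | hne
  · rfl
  · exact (show (G.induce (s ∩ t)).Adj ⟨z, hz⟩ ⟨z₀, hz₀s, hct hz₀c⟩ from
      hc hzc hz₀c hne).reachable

namespace Subgraph

theorem coe_induce_eq (H : G.Subgraph) (s : Set V) :
    (H.induce s).coe = H.spanningCoe.induce s := by
  ext ⟨u, hu⟩ ⟨v, hv⟩
  exact ⟨fun h => h.2.2, fun h => ⟨hu, hv, h⟩⟩

theorem induce_induce_of_subset {H : G.Subgraph} (hst : s ⊆ t) :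
    (H.induce t).induce s = H.induce s := by
  ext u v
  · rfl
  · simp only [Subgraph.induce_adj]
    exact ⟨fun h => ⟨h.1, h.2.1, h.2.2.2.2⟩, fun h => ⟨h.1, h.2.1, hst h.1, hst h.2.1, h.2.2⟩⟩

theorem coe_induce_singleton_connected (H : G.Subgraph) (x : V) :
    (H.induce {x}).coe.Connected := by
  have : Subsingleton (H.induce {x}).verts := Set.subsingleton_singleton.coe_sort
  exact { preconnected := .of_subsingleton, nonempty := ⟨⟨x, rfl⟩⟩ }

end Subgraph

end SimpleGraph

/-! ### Clique separations -/

structure IsCliqueSeparation (H : FGraph) (P Q : Set ℕ) : Prop where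
  verts_subset : H.verts ⊆ P ∪ Q
  adj : ∀ ⦃p q⦄, H.Adj p q → p ∈ P ∧ q ∈ P ∨ p ∈ Q ∧ q ∈ Q
  pairwise_adj : (P ∩ Q).Pairwise H.Adj

namespace IsCliqueSeparation

variable {H : FGraph} {P Q D : Set ℕ}

theorem symm (h : IsCliqueSeparation H P Q) : IsCliqueSeparation H Q P :=
  ⟨Set.union_comm P Q ▸ h.verts_subset, fun _ _ hpq => (h.adj hpq).symm,
    Set.inter_comm P Q ▸ h.pairwise_adj⟩

theorem mem_of_adj (h : IsCliqueSeparation H P Q) {p q : ℕ} (hpq : H.Adj p q) (hp : p ∉ Q) :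
    p ∈ P ∧ q ∈ P :=
  (h.adj hpq).resolve_right fun h' => hp h'.1

theorem sdiff_singleton (h : IsCliqueSeparation H P Q) {v : ℕ} (hv : v ∈ Q)
    (hvQ : ∀ q, H.Adj v q → q ∈ Q) : IsCliqueSeparation H (P \ {v}) Q where
  verts_subset p hp := by
    rcases h.verts_subset hp with hp | hp
    · by_cases hpv : p = v
      · exact Or.inr (hpv ▸ hv)
      · exact Or.inl ⟨hp, hpv⟩
    · exact Or.inr hp
  adj p q hpq := by
    by_cases hpQ : p ∈ Q
    · by_cases hqQ : q ∈ Q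
      · exact Or.inr ⟨hpQ, hqQ⟩
      · have hpv : p ≠ v := by rintro rfl; exact hqQ (hvQ q hpq)
        have := h.mem_of_adj (H.adj_symm hpq) hqQ
        exact Or.inl ⟨⟨this.2, hpv⟩, ⟨this.1, by rintro rfl; exact hqQ hv⟩⟩
    · have := h.mem_of_adj hpq hpQ
      have hqv : q ≠ v := by rintro rfl; exact hpQ (hvQ p (H.adj_symm hpq))
      exact Or.inl ⟨⟨this.1, by rintro rfl; exact hpQ hv⟩, ⟨this.2, hqv⟩⟩
  pairwise_adj := h.pairwise_adj.mono (Set.inter_subset_inter_left Q Set.sdiff_subset)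

theorem subset_of_connected (h : IsCliqueSeparation H P Q) (hD : (H.induce D).coe.Connected)
    (hDS : Disjoint D (P ∩ Q)) {p : ℕ} (hp : p ∈ D ∩ P) : D ⊆ P := by
  rw [Subgraph.coe_induce_eq] at hD
  refine SimpleGraph.subset_of_preconnected_induce hD.preconnected hp fun p hp q _ hpq => ?_
  exact (h.mem_of_adj hpq fun hpQ => Set.disjoint_left.1 hDS hp.1 ⟨hp.2, hpQ⟩).2

theorem exists_mem_inter (h : IsCliqueSeparation H P Q) (hD : (H.induce D).coe.Connected)
    {p q : ℕ} (hp : p ∈ D ∩ P) (hq : q ∈ D ∩ Q) : ∃ s ∈ D, s ∈ P ∩ Q := by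
  by_contra! hDS
  have hDP := h.subset_of_connected hD (Set.disjoint_left.2 hDS) hp
  exact hDS q hq.1 ⟨hDP hq.1, hq.2⟩

theorem exists_mem_inter_of_adj (h : IsCliqueSeparation H P Q) (hD : (H.induce D).coe.Connected)
    {p q p' q' : ℕ} (hp : p ∉ Q) (hpq : H.Adj p q) (hq : q ∈ D) (hp' : p' ∉ P)
    (hpq' : H.Adj p' q') (hq' : q' ∈ D) : ∃ s ∈ D, s ∈ P ∩ Q :=
  h.exists_mem_inter hD ⟨hq, (h.mem_of_adj hpq hp).2⟩ ⟨hq', (h.symm.mem_of_adj hpq' hp').2⟩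

theorem connected_inter (h : IsCliqueSeparation H P Q) (hD : (H.induce D).coe.Connected)
    (hDS : (D ∩ (P ∩ Q)).Nonempty) : (H.induce (D ∩ P)).coe.Connected := by
  rw [Subgraph.coe_induce_eq] at hD ⊢
  exact SimpleGraph.connected_induce_inter hD hDS Set.inter_subset_left h.pairwise_adj
    fun p hp hpS q _ hpq => (h.mem_of_adj hpq fun hpQ => hpS ⟨hp.2, hpQ⟩).2

end IsCliqueSeparation

theorem isCliqueSeparation_sup {A B : FGraph} (h : (A.verts ∩ B.verts).Pairwise A.Adj) :
    IsCliqueSeparation (A ⊔ B) A.verts B.verts where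
  verts_subset := subset_rfl
  adj _ _ hpq := (Subgraph.sup_adj.1 hpq).imp (fun h => ⟨A.edge_vert h, A.edge_vert h.symm⟩)
    fun h => ⟨B.edge_vert h, B.edge_vert h.symm⟩
  pairwise_adj := h.mono' fun _ _ h => Or.inl h

theorem sup_induce_left_le {A B : FGraph} (h : (A.verts ∩ B.verts).Pairwise A.Adj) :
    (A ⊔ B).induce A.verts ≤ A := by
  refine ⟨subset_rfl, fun p q ⟨hp, hq, hpq⟩ => (Subgraph.sup_adj.1 hpq).elim id fun hB => ?_⟩
  exact h ⟨hp, B.edge_vert hB⟩ ⟨hq, B.edge_vert hB.symm⟩ (B.adj_sub hB)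

/-! ### Minor models -/

structure IsMinorModel (K Γ : FGraph) (β : ℕ → Finset ℕ) : Prop where
  nonempty : ∀ u ∈ K.verts, (β u).Nonempty
  subset_verts : ∀ u ∈ K.verts, ↑(β u) ⊆ Γ.verts
  connected : ∀ u ∈ K.verts, (Γ.induce ↑(β u)).coe.Connected
  disjoint : ∀ u ∈ K.verts, ∀ v ∈ K.verts, u ≠ v → Disjoint (β u) (β v)
  exists_adj : ∀ u v, K.Adj u v → ∃ p ∈ β u, ∃ q ∈ β v, Γ.Adj p q

theorem isMinor_iff_exists_isMinorModel {K Γ : FGraph} :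
    IsMinor K Γ ↔ ∃ β, IsMinorModel K Γ β :=
  ⟨fun ⟨β, h, hd, ha⟩ => ⟨β, ⟨fun u hu => (h u hu).1, fun u hu => (h u hu).2.1,
      fun u hu => (h u hu).2.2, hd, ha⟩⟩,
    fun ⟨β, h⟩ => ⟨β, fun u hu => ⟨h.nonempty u hu, h.subset_verts u hu, h.connected u hu⟩,
      h.disjoint, h.exists_adj⟩⟩

namespace IsMinorModel

variable {K Γ : FGraph} {β : ℕ → Finset ℕ}

theorem comp (hβ : IsMinorModel K Γ β) {K' : FGraph} {σ : ℕ → ℕ}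
    (hσ : Set.MapsTo σ K'.verts K.verts) (hinj : Set.InjOn σ K'.verts)
    (hadj : ∀ u v, K'.Adj u v → K.Adj (σ u) (σ v)) : IsMinorModel K' Γ (β ∘ σ) where
  nonempty _ hu := hβ.nonempty _ (hσ hu)
  subset_verts _ hu := hβ.subset_verts _ (hσ hu)
  connected _ hu := hβ.connected _ (hσ hu)
  disjoint _ hu _ hv huv := hβ.disjoint _ (hσ hu) _ (hσ hv) fun h => huv (hinj hu hv h)
  exists_adj u v huv := hβ.exists_adj _ _ (hadj u v huv)

theorem mono (hβ : IsMinorModel K Γ β) {Γ' : FGraph} (hle : Γ ≤ Γ') : IsMinorModel K Γ' β where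
  nonempty := hβ.nonempty
  subset_verts u hu := (hβ.subset_verts u hu).trans hle.1
  connected u hu := ((Subgraph.connected_iff'.2 (hβ.connected u hu)).mono
    (Subgraph.induce_mono_left hle) rfl).coe
  disjoint := hβ.disjoint
  exists_adj u v huv :=
    let ⟨p, hp, q, hq, hpq⟩ := hβ.exists_adj u v huv
    ⟨p, hp, q, hq, hle.2 hpq⟩

theorem of_le (hβ : IsMinorModel K Γ β) {K' : FGraph} (hle : K' ≤ K) : IsMinorModel K' Γ β where
  nonempty u hu := hβ.nonempty u (hle.1 hu)
  subset_verts u hu := hβ.subset_verts u (hle.1 hu)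
  connected u hu := hβ.connected u (hle.1 hu)
  disjoint u hu v hv := hβ.disjoint u (hle.1 hu) v (hle.1 hv)
  exists_adj u v huv := hβ.exists_adj u v (hle.2 huv)

theorem update {k : ℕ} (hβ : IsMinorModel (K.deleteVerts {k}) Γ β) {x : ℕ} (hx : x ∈ Γ.verts)
    (hxβ : ∀ n ∈ K.verts, n ≠ k → x ∉ β n) (hadj : ∀ n, K.Adj k n → ∃ q ∈ β n, Γ.Adj x q) :
    IsMinorModel K Γ (Function.update β k {x}) where
  nonempty n hn := by
    rcases eq_or_ne n k with rfl | hnk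
    · simp
    · simpa [hnk] using hβ.nonempty n ⟨hn, hnk⟩
  subset_verts n hn := by
    rcases eq_or_ne n k with rfl | hnk
    · simpa using hx
    · simpa [hnk] using hβ.subset_verts n ⟨hn, hnk⟩
  connected n hn := by
    rcases eq_or_ne n k with rfl | hnk
    · rw [Function.update_self, Finset.coe_singleton]
      exact Subgraph.coe_induce_singleton_connected Γ x
    · rw [Function.update_of_ne hnk]
      exact hβ.connected n ⟨hn, hnk⟩
  disjoint m hm n hn hmn := by
    rcases eq_or_ne m k with rfl | hmk
    · simpa [hmn.symm] using hxβ n hn hmn.symm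
    rcases eq_or_ne n k with rfl | hnk
    · simpa [hmk] using hxβ m hm hmk
    simpa [hmk, hnk] using hβ.disjoint m ⟨hm, hmk⟩ n ⟨hn, hnk⟩ hmn
  exists_adj m n hmn := by
    rcases eq_or_ne m k with rfl | hmk
    · have hnm : n ≠ m := fun e => K.adj_sub hmn e.symm
      simpa [hnm] using hadj n hmn
    rcases eq_or_ne n k with rfl | hnk
    · obtain ⟨q, hq, hxq⟩ := hadj m (K.adj_symm hmn)
      exact ⟨q, by simpa [hmk] using hq, x, by simp, Γ.adj_symm hxq⟩
    simpa [hmk, hnk] using hβ.exists_adj m n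
      ⟨⟨K.edge_vert hmn, hmk⟩, ⟨K.edge_vert hmn.symm, hnk⟩, hmn⟩

end IsMinorModel

theorem IsMinor.mono {K Γ Γ' : FGraph} (h : IsMinor K Γ) (hle : Γ ≤ Γ') : IsMinor K Γ' :=
  let ⟨β, hβ⟩ := isMinor_iff_exists_isMinorModel.1 h
  isMinor_iff_exists_isMinorModel.2 ⟨β, hβ.mono hle⟩

theorem Planar.anti {Γ Γ' : FGraph} (h : Planar Γ') (hle : Γ ≤ Γ') : Planar Γ :=
  ⟨fun hK => h.1 (hK.mono hle), fun hK => h.2 (hK.mono hle)⟩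

namespace IsCliqueSeparation

variable {H K : FGraph} {P Q : Set ℕ} {β : ℕ → Finset ℕ}

theorem isMinorModel_filter [DecidablePred (· ∈ P)] (h : IsCliqueSeparation H P Q)
    (hβ : IsMinorModel K H β) (hmeet : ∀ u ∈ K.verts, ∃ p ∈ β u, p ∈ P) :
    IsMinorModel K (H.induce P) fun u => (β u).filter (· ∈ P) := by
  have hmeetS : ∀ u ∈ K.verts, ∀ q ∈ β u, q ∈ Q → ∃ s ∈ β u, s ∈ P ∩ Q := fun u hu q hq hqQ =>
    let ⟨p, hp, hpP⟩ := hmeet u hu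
    h.exists_mem_inter (hβ.connected u hu) ⟨hp, hpP⟩ ⟨hq, hqQ⟩
  refine ⟨fun u hu => ?_, fun u _ p hp => (Finset.mem_filter.1 hp).2, fun u hu => ?_,
    fun u hu v hv huv => Finset.disjoint_filter_filter (hβ.disjoint u hu v hv huv),
    fun u v huv => ?_⟩
  · obtain ⟨p, hp, hpP⟩ := hmeet u hu
    exact ⟨p, Finset.mem_filter.2 ⟨hp, hpP⟩⟩
  · rw [show (↑((β u).filter (· ∈ P)) : Set ℕ) = ↑(β u) ∩ P by ext; simp,
      Subgraph.induce_induce_of_subset Set.inter_subset_right]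
    by_cases hS : ∃ s ∈ β u, s ∈ P ∩ Q
    · obtain ⟨s, hs, hsS⟩ := hS
      exact h.connected_inter (hβ.connected u hu) ⟨s, hs, hsS⟩
    · obtain ⟨p, hp, hpP⟩ := hmeet u hu
      rw [Set.inter_eq_left.2 (h.subset_of_connected (hβ.connected u hu)
        (Set.disjoint_left.2 fun s hs hsS => hS ⟨s, hs, hsS⟩) ⟨hp, hpP⟩)]
      exact hβ.connected u hu
  · obtain ⟨p, hp, q, hq, hpq⟩ := hβ.exists_adj u v huv
    by_cases hpqP : p ∈ P ∧ q ∈ P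
    · exact ⟨p, Finset.mem_filter.2 ⟨hp, hpqP.1⟩, q, Finset.mem_filter.2 ⟨hq, hpqP.2⟩,
        hpqP.1, hpqP.2, hpq⟩
    -- an edge leaving `P` runs inside `Q`, so both branch sets meet the clique `P ∩ Q`
    have hpqQ := (h.adj hpq).resolve_left hpqP
    have hu := K.edge_vert huv
    have hv := K.edge_vert (K.adj_symm huv)
    obtain ⟨s, hs, hsS⟩ := hmeetS u hu p hp hpqQ.1
    obtain ⟨t, ht, htS⟩ := hmeetS v hv q hq hpqQ.2
    have hst : s ≠ t := fun e =>
      Finset.disjoint_left.1 (hβ.disjoint u hu v hv (K.adj_sub huv)) hs (e ▸ ht)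
    exact ⟨s, Finset.mem_filter.2 ⟨hs, hsS.1⟩, t, Finset.mem_filter.2 ⟨ht, htS.1⟩,
      hsS.1, htS.1, h.pairwise_adj hsS htS hst⟩

theorem exists_branch_sets_off_sides (h : IsCliqueSeparation H P Q) (hβ : IsMinorModel K H β)
    (hP : ¬ IsMinor K (H.induce P)) (hQ : ¬ IsMinor K (H.induce Q)) :
    ∃ u ∈ K.verts, ∃ v ∈ K.verts, u ≠ v ∧ ¬ K.Adj u v ∧
      (∀ p ∈ β u, p ∉ P) ∧ (∀ q ∈ β v, q ∉ Q) := by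
  classical
  obtain ⟨u, hu, hβu⟩ : ∃ u ∈ K.verts, ∀ p ∈ β u, p ∉ P := by
    by_contra! hmeet
    exact hP (isMinor_iff_exists_isMinorModel.2 ⟨_, h.isMinorModel_filter hβ hmeet⟩)
  obtain ⟨v, hv, hβv⟩ : ∃ v ∈ K.verts, ∀ q ∈ β v, q ∉ Q := by
    by_contra! hmeet
    exact hQ (isMinor_iff_exists_isMinorModel.2 ⟨_, h.symm.isMinorModel_filter hβ hmeet⟩)
  refine ⟨u, hu, v, hv, ?_, fun huv => ?_, hβu, hβv⟩
  · rintro rfl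
    obtain ⟨p, hp⟩ := hβ.nonempty u hu
    exact (h.verts_subset (hβ.subset_verts u hu hp)).elim (hβu p hp) (hβv p hp)
  · obtain ⟨p, hp, q, hq, hpq⟩ := hβ.exists_adj u v huv
    exact hβv q hq (h.symm.mem_of_adj hpq (hβu p hp)).2

theorem not_isMinor_cliqueGraph (h : IsCliqueSeparation H P Q) {s : Finset ℕ}
    (hP : ¬ IsMinor (cliqueGraph s) (H.induce P)) (hQ : ¬ IsMinor (cliqueGraph s) (H.induce Q)) :
    ¬ IsMinor (cliqueGraph s) H := fun hK =>
  let ⟨_, hβ⟩ := isMinor_iff_exists_isMinorModel.1 hK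
  let ⟨_, hu, _, hv, huv, hadj, _⟩ := h.exists_branch_sets_off_sides hβ hP hQ
  hadj ⟨hu, hv, huv⟩

end IsCliqueSeparation

/-! ### `K₃,₃`-minors across a separation along `K₄` -/

theorem Finset.subset_union_union_of_disjoint {α : Type*} [DecidableEq α] {A B C T : Finset α}
    (hT : T.card ≤ 3) (hAB : Disjoint A B) (hAC : Disjoint A C) (hBC : Disjoint B C)
    (hA : (A ∩ T).Nonempty) (hB : (B ∩ T).Nonempty) (hC : (C ∩ T).Nonempty) :
    T ⊆ A ∪ B ∪ C := by
  have hcover : A ∩ T ∪ B ∩ T ∪ C ∩ T = T := by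
    refine Finset.eq_of_subset_of_card_le (by simp [Finset.union_subset_iff]) ?_
    rw [Finset.card_union_of_disjoint, Finset.card_union_of_disjoint]
    · linarith [hA.card_pos, hB.card_pos, hC.card_pos]
    · exact Finset.disjoint_of_subset_left Finset.inter_subset_left
        (Finset.disjoint_of_subset_right Finset.inter_subset_left hAB)
    · rw [Finset.disjoint_union_left]
      exact ⟨Finset.disjoint_of_subset_left Finset.inter_subset_left
          (Finset.disjoint_of_subset_right Finset.inter_subset_left hAC),
        Finset.disjoint_of_subset_left Finset.inter_subset_left
          (Finset.disjoint_of_subset_right Finset.inter_subset_left hBC)⟩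
  rw [← hcover]
  exact Finset.union_subset_union (Finset.union_subset_union Finset.inter_subset_left
    Finset.inter_subset_left) Finset.inter_subset_left

namespace IsMinorModel

variable {Γ : FGraph} {β : ℕ → Finset ℕ}

theorem exists_K33_relabel (hβ : IsMinorModel K33g Γ β) {u v : ℕ} (hu : u ∈ K33g.verts)
    (hv : v ∈ K33g.verts) (huv : u ≠ v) (hadj : ¬ K33g.Adj u v) :
    ∃ β', IsMinorModel K33g Γ β' ∧ β' 0 = β u ∧ β' 1 = β v := by
  have hu6 : u < 6 := hu
  have hv6 : v < 6 := hv
  have hside : u < 3 ∧ v < 3 ∨ 3 ≤ u ∧ 3 ≤ v := by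
    simp only [K33g] at hadj
    omega
  -- `2` goes to the third vertex of the part of `u` and `v`, and `3, 4, 5` to the other part
  refine ⟨β ∘ fun n => if n = 0 then u else if n = 1 then v
      else if n = 2 then (if u < 3 then 3 else 12) - u - v else (n + if u < 3 then 0 else 3) % 6,
    hβ.comp ?_ ?_ ?_, by simp, by simp⟩
  · intro n hn
    simp only [K33g, Set.mem_ofPred_eq] at hn ⊢
    split_ifs <;> omega
  · intro m hm n hn hmn
    simp only [K33g, Set.mem_ofPred_eq] at hm hn hmn ⊢
    split_ifs at hmn <;> omega
  · intro m n hmn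
    simp only [K33g] at hmn ⊢
    split_ifs <;> omega

theorem K33_disjoint_of_meets (hβ : IsMinorModel K33g Γ β) {T : Finset ℕ} (hT : T.card ≤ 3)
    (hmeet : ∀ n, 3 ≤ n → n < 6 → ∃ s ∈ β n, s ∈ T) {i : ℕ} (hi : i < 3) :
    Disjoint (β i) T := by
  have hd : ∀ m n, m < 6 → n < 6 → m ≠ n → Disjoint (β m) (β n) := fun m n hm hn =>
    hβ.disjoint m hm n hn
  have hmeet' : ∀ n, 3 ≤ n → n < 6 → (β n ∩ T).Nonempty := fun n hn hn6 =>
    let ⟨s, hs, hsT⟩ := hmeet n hn hn6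
    ⟨s, Finset.mem_inter.2 ⟨hs, hsT⟩⟩
  refine Finset.disjoint_of_subset_right (Finset.subset_union_union_of_disjoint hT
    (hd 3 4 (by omega) (by omega) (by omega)) (hd 3 5 (by omega) (by omega) (by omega))
    (hd 4 5 (by omega) (by omega) (by omega)) (hmeet' 3 le_rfl (by omega))
    (hmeet' 4 (by omega) (by omega)) (hmeet' 5 (by omega) (by omega))) ?_
  simp only [Finset.disjoint_union_right]
  exact ⟨⟨hd i 3 (by omega) (by omega) (by omega), hd i 4 (by omega) (by omega) (by omega)⟩,
    hd i 5 (by omega) (by omega) (by omega)⟩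

theorem K33_disjoint_of_meets_sdiff (hβ : IsMinorModel K33g Γ β) {S : Set ℕ} {a b c x : ℕ}
    (hS : S = {x, c, a, b}) (hmx : ∀ n, 3 ≤ n → n < 6 → ∃ s ∈ β n, s ∈ S \ {x})
    (hmc : ∀ n, 3 ≤ n → n < 6 → ∃ s ∈ β n, s ∈ S \ {c}) {i : ℕ} (hi : i < 3) :
    Disjoint (↑(β i) : Set ℕ) S := by
  subst hS
  have hcab := hβ.K33_disjoint_of_meets (T := {c, a, b}) Finset.card_le_three (fun n hn hn6 => by
    obtain ⟨s, hs, hsS, hsx⟩ := hmx n hn hn6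
    exact ⟨s, hs, by simp at hsS hsx ⊢; tauto⟩) hi
  have hxab := hβ.K33_disjoint_of_meets (T := {x, a, b}) Finset.card_le_three (fun n hn hn6 => by
    obtain ⟨s, hs, hsS, hsc⟩ := hmc n hn hn6
    exact ⟨s, hs, by simp at hsS hsc ⊢; tauto⟩) hi
  rw [← Finset.disjoint_coe] at hcab hxab
  refine Set.disjoint_of_subset_right (fun s => ?_) (Set.disjoint_union_right.2 ⟨hcab, hxab⟩)
  simp only [Set.mem_insert_iff, Set.mem_singleton_iff, Finset.coe_insert, Finset.coe_singleton,
    Set.mem_union]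
  tauto

end IsMinorModel

namespace IsCliqueSeparation

variable {H : FGraph} {P Q : Set ℕ} {β : ℕ → Finset ℕ}

theorem exists_mem_inter_of_K33 (h : IsCliqueSeparation H P Q) (hβ : IsMinorModel K33g H β)
    {i j : ℕ} (hi : i < 3) (hj : j < 3) (hiQ : ∀ p ∈ β i, p ∉ Q) (hjP : ∀ p ∈ β j, p ∉ P)
    {n : ℕ} (hn : 3 ≤ n) (hn6 : n < 6) : ∃ s ∈ β n, s ∈ P ∩ Q := by
  obtain ⟨p, hp, q, hq, hpq⟩ := hβ.exists_adj i n (Or.inl ⟨hi, hn, hn6⟩)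
  obtain ⟨p', hp', q', hq', hpq'⟩ := hβ.exists_adj j n (Or.inl ⟨hj, hn, hn6⟩)
  exact h.exists_mem_inter_of_adj (hβ.connected n hn6) (hiQ p hp) hpq hq (hjP p' hp') hpq' hq'

theorem isMinor_K33_of_apex (hsep : IsCliqueSeparation H P Q) {x : ℕ}
    (hsepx : IsCliqueSeparation H (P \ {x}) Q) (hx : x ∈ P ∩ Q) (hβ : IsMinorModel K33g H β)
    {k : ℕ} (hk : k < 3) (hside : ∀ i < 3, i ≠ k → ∀ p ∈ β i, p ∉ Q)
    (hmeet : ∀ n, 3 ≤ n → n < 6 → ∃ s ∈ β n, s ∈ (P \ {x}) ∩ Q) :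
    IsMinor K33g (H.induce P) := by
  classical
  have hmeetP : ∀ n ∈ (K33g.deleteVerts {k}).verts, ∃ p ∈ β n, p ∈ P \ {x} := by
    rintro n ⟨hn, hnk⟩
    by_cases hn3 : n < 3
    · obtain ⟨p, hp⟩ := hβ.nonempty n hn
      exact ⟨p, hp, (hsepx.verts_subset (hβ.subset_verts n hn hp)).resolve_right
        (hside n hn3 hnk p hp)⟩
    · obtain ⟨s, hs, hsS⟩ := hmeet n (by simp [K33g] at hn; omega) hn
      exact ⟨s, hs, hsS.1⟩
  have hβ' := (hsepx.isMinorModel_filter (hβ.of_le Subgraph.deleteVerts_le) hmeetP).mono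
    (Subgraph.induce_mono_right Set.sdiff_subset)
  refine isMinor_iff_exists_isMinorModel.2 ⟨_, hβ'.update hx.1
    (fun n _ _ h => (Finset.mem_filter.1 h).2.2 rfl) fun n hkn => ?_⟩
  -- `x` replaces the branch set `k`: it is adjacent to the separator vertex of each far one
  obtain ⟨s, hs, hsS⟩ := hmeet n (by simp [K33g] at hkn; omega) (by simp [K33g] at hkn; omega)
  exact ⟨s, Finset.mem_filter.2 ⟨hs, hsS.1⟩, hx.1, hsS.1.1,
    hsep.pairwise_adj hx ⟨hsS.1.1, hsS.2⟩ fun e => hsS.1.2 e.symm⟩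

theorem isMinor_K33_induce_or (hsep : IsCliqueSeparation H P Q) {a b c x : ℕ}
    (hS : P ∩ Q = {x, c, a, b}) (hxQ : ∀ q, H.Adj x q → q ∈ Q) (hcP : ∀ p, H.Adj c p → p ∈ P)
    (hβ : IsMinorModel K33g H β) (h0 : ∀ p ∈ β 0, p ∉ Q) (h1 : ∀ p ∈ β 1, p ∉ P) :
    IsMinor K33g (H.induce P) ∨ IsMinor K33g (H.induce Q) := by
  have hxS : x ∈ P ∩ Q := hS ▸ Set.mem_insert x _
  have hcS : c ∈ P ∩ Q := hS ▸ Set.mem_insert_of_mem x (Set.mem_insert c _)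
  have hsepx := hsep.sdiff_singleton hxS.2 hxQ
  have hsepc := hsep.symm.sdiff_singleton hcS.1 hcP
  have hmeetx : ∀ n, 3 ≤ n → n < 6 → ∃ s ∈ β n, s ∈ (P \ {x}) ∩ Q := fun n =>
    hsepx.exists_mem_inter_of_K33 hβ (i := 0) (j := 1) (by omega) (by omega) h0
      fun p hp h => h1 p hp h.1
  have hmeetc : ∀ n, 3 ≤ n → n < 6 → ∃ s ∈ β n, s ∈ (Q \ {c}) ∩ P := fun n =>
    hsepc.exists_mem_inter_of_K33 hβ (i := 1) (j := 0) (by omega) (by omega) h1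
      fun p hp h => h0 p hp h.1
  -- the far branch sets meet both `{c, a, b}` and `{x, a, b}`, hence cover `P ∩ Q`
  have h2 := hβ.K33_disjoint_of_meets_sdiff hS
    (fun n hn hn6 => let ⟨s, hs, ⟨hsP, hsx⟩, hsQ⟩ := hmeetx n hn hn6; ⟨s, hs, ⟨hsP, hsQ⟩, hsx⟩)
    (fun n hn hn6 => let ⟨s, hs, ⟨hsQ, hsc⟩, hsP⟩ := hmeetc n hn hn6; ⟨s, hs, ⟨hsP, hsQ⟩, hsc⟩)
    (i := 2) (by omega)
  have hK2 : 2 ∈ K33g.verts := by simp [K33g]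
  obtain ⟨p, hp⟩ := hβ.nonempty 2 hK2
  rcases hsep.verts_subset (hβ.subset_verts 2 hK2 hp) with hpP | hpQ
  · have h2P := hsep.subset_of_connected (hβ.connected 2 hK2) h2 ⟨hp, hpP⟩
    refine .inl (hsep.isMinor_K33_of_apex hsepx hxS hβ (k := 1) (by omega) ?_ hmeetx)
    intro i hi hik q hq
    obtain rfl | rfl : i = 0 ∨ i = 2 := by omega
    · exact h0 q hq
    · exact fun hqQ => Set.disjoint_left.1 h2 hq ⟨h2P hq, hqQ⟩
  · have h2Q := hsep.symm.subset_of_connected (hβ.connected 2 hK2)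
      (Set.inter_comm P Q ▸ h2) ⟨hp, hpQ⟩
    refine .inr (hsep.symm.isMinor_K33_of_apex hsepc ⟨hcS.2, hcS.1⟩ hβ (k := 0) (by omega) ?_
      hmeetc)
    intro i hi hik q hq
    obtain rfl | rfl : i = 1 ∨ i = 2 := by omega
    · exact h1 q hq
    · exact fun hqP => Set.disjoint_left.1 h2 hq ⟨hqP, h2Q hq⟩

theorem planar (hsep : IsCliqueSeparation H P Q) {a b c x : ℕ} (hS : P ∩ Q = {x, c, a, b})
    (hxQ : ∀ q, H.Adj x q → q ∈ Q) (hcP : ∀ p, H.Adj c p → p ∈ P)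
    (hP : Planar (H.induce P)) (hQ : Planar (H.induce Q)) : Planar H := by
  refine ⟨hsep.not_isMinor_cliqueGraph hP.1 hQ.1, fun hK => ?_⟩
  obtain ⟨β₀, hβ₀⟩ := isMinor_iff_exists_isMinorModel.1 hK
  obtain ⟨u, hu, v, hv, huv, hadj, hβu, hβv⟩ := hsep.exists_branch_sets_off_sides hβ₀ hP.2 hQ.2
  obtain ⟨β, hβ, hβ0, hβ1⟩ :=
    hβ₀.exists_K33_relabel hv hu huv.symm fun h => hadj (K33g.adj_symm h)
  exact (hsep.isMinor_K33_induce_or hS hxQ hcP hβ (hβ0 ▸ hβv) (hβ1 ▸ hβu)).elim hP.2 hQ.2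

end IsCliqueSeparation

theorem planar_sup {A B : FGraph} {a b c x : ℕ} (hS : A.verts ∩ B.verts = {x, c, a, b})
    (hA : (A.verts ∩ B.verts).Pairwise A.Adj) (hB : (A.verts ∩ B.verts).Pairwise B.Adj)
    (hxB : ∀ q, A.Adj x q → q ∈ B.verts) (hcA : ∀ p, B.Adj c p → p ∈ A.verts)
    (hAp : Planar A) (hBp : Planar B) : Planar (A ⊔ B) := by
  refine (isCliqueSeparation_sup hA).planar hS (fun q hq => ?_) (fun p hp => ?_)
    (hAp.anti (sup_induce_left_le hA)) (hBp.anti ?_)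
  · exact (Subgraph.sup_adj.1 hq).elim (hxB q) fun h => B.edge_vert h.symm
  · exact (Subgraph.sup_adj.1 hp).elim (fun h => A.edge_vert h.symm) (hcA p)
  · rw [sup_comm]
    exact sup_induce_left_le (Set.inter_comm A.verts B.verts ▸ hB)

/-! ### The two decompositions of `G1 ∪ G2 + xc` -/

theorem mem_of_addVertex_adj {G : FGraph} {v q : ℕ} {s : Finset ℕ} (hv : v ∉ G.verts)
    (h : (addVertex G v s).Adj v q) : q ∈ s := by
  rcases h with h | h | h
  · exact absurd (G.edge_vert h) hv
  · exact h.2.2.1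
  · exact absurd rfl h.2.1

theorem addVertex_eq_self {F : FGraph} {v : ℕ} {s : Finset ℕ} (hv : v ∈ F.verts)
    (hs : ∀ y ∈ s, y ∈ F.verts → y ≠ v → F.Adj v y) : addVertex F v s = F := by
  refine le_antisymm (show addVertex F v s ≤ F from ⟨(Set.insert_eq_of_mem hv).le, fun p q h => ?_⟩)
    (le_addVertex F v s)
  rcases h with h | ⟨rfl, h⟩ | ⟨rfl, h⟩
  · exact h
  · exact hs q h.2.1 h.2.2 h.1
  · exact (hs p h.2.1 h.2.2 h.1).symm

theorem addEdge_sup_eq_addVertex_sup {G1 G2 : FGraph} {a b c x : ℕ} (hc : c ∈ G1.verts)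
    (hax : G2.Adj a x) (hbx : G2.Adj b x) :
    addEdge (G1 ⊔ G2) x c = addVertex G1 x {a, b, c} ⊔ G2 := by
  have := G2.edge_vert hax
  have := G2.edge_vert hbx
  ext p q
  · simp only [addEdge, addVertex, Subgraph.verts_sup, Set.mem_insert_iff, Set.mem_union]
    grind
  · simp only [addEdge, addVertex, Subgraph.sup_adj, Finset.mem_insert, Finset.mem_singleton]
    grind [Subgraph.Adj.symm, Subgraph.edge_vert]

theorem addVertex_sup_eq_addVertex_sup_addVertex {G1 G2 : FGraph} {a b c x : ℕ}
    (hbc : G1.Adj b c) (hac : G1.Adj a c) (hab : G2.Adj a b) (hbx : G2.Adj b x)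
    (hax : G2.Adj a x) :
    addVertex G1 x {a, b, c} ⊔ G2 = addVertex G1 x {a, b, c} ⊔ addVertex G2 c {a, b, x} := by
  have hc := G1.edge_vert hac.symm
  rw [sup_addVertex (isCliqueIn_triangle hab hbx hax).1,
    addVertex_eq_self (F := addVertex G1 x {a, b, c} ⊔ G2) (Or.inl (Or.inr hc))]
  intro y hy _ hyc
  simp only [Finset.mem_insert, Finset.mem_singleton] at hy
  rcases hy with rfl | rfl | rfl
  · exact Or.inl (Or.inl hac.symm)
  · exact Or.inl (Or.inl hbc.symm)
  · exact Or.inl (Or.inr (Or.inr ⟨rfl, hyc.symm, by simp, hc⟩))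

section Gluing

variable {G1 G2 : FGraph} {a b c x : ℕ}

theorem isKTree_addVertex_sup (h1 : IsKTree 3 G1) (h2 : IsKTree 3 G2)
    (hinter : G1.verts ∩ G2.verts = {a, b}) (hab : a ≠ b) (hab1 : G1.Adj a b) (hbc : G1.Adj b c)
    (hac : G1.Adj a c) (hab2 : G2.Adj a b) (hbx : G2.Adj b x) (hax : G2.Adj a x)
    (hc : c ∉ G2.verts) (hx : x ∉ G1.verts) : IsKTree 3 (addVertex G1 x {a, b, c} ⊔ G2) := by
  have := G1.edge_vert hab1
  have := G2.edge_vert hax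
  have := G2.edge_vert hbx
  have hx2 := G2.edge_vert hax.symm
  have hT1 := isCliqueIn_triangle hab1 hbc hac
  refine (IsKTree.grow G1 h1 _ ?_ hT1 x hx).sup h2 (s := {x, a, b}) ?_
    ((hT1.addVertex hx).subset (by grind)) (isCliqueIn_triangle hax.symm hab2 hbx.symm) ?_
  · exact Finset.card_eq_three.2 ⟨a, b, c, hab, by grind, by grind, rfl⟩
  · exact Finset.card_eq_three.2 ⟨x, a, b, by grind, by grind, hab, rfl⟩
  · change insert x G1.verts ∩ G2.verts = _
    rw [Set.insert_inter_of_mem hx2, hinter]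
    simp

theorem planar_addVertex_sup_addVertex (hinter : G1.verts ∩ G2.verts = {a, b})
    (hab1 : G1.Adj a b) (hbc : G1.Adj b c) (hac : G1.Adj a c) (hab2 : G2.Adj a b)
    (hbx : G2.Adj b x) (hax : G2.Adj a x) (hc : c ∉ G2.verts) (hx : x ∉ G1.verts)
    (hW1 : Planar (addVertex G1 x {a, b, c})) (hW2 : Planar (addVertex G2 c {a, b, x})) :
    Planar (addVertex G1 x {a, b, c} ⊔ addVertex G2 c {a, b, x}) := by
  have hS : (addVertex G1 x {a, b, c}).verts ∩ (addVertex G2 c {a, b, x}).verts =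
      {x, c, a, b} := by
    change insert x G1.verts ∩ insert c G2.verts = _
    rw [Set.insert_inter_of_mem (Set.mem_insert_of_mem c (G2.edge_vert hax.symm)),
      Set.inter_insert_of_mem (G1.edge_vert hac.symm), hinter]
  refine planar_sup hS (hS ▸ ((isCliqueIn_triangle hab1 hbc hac).addVertex hx).pairwise.mono ?_)
    (hS ▸ ((isCliqueIn_triangle hab2 hbx hax).addVertex hc).pairwise.mono ?_)
    (fun q hq => ?_) (fun p hp => ?_) hW1 hW2
  · intro p; simp; tauto
  · intro p; simp; tauto
  · have := mem_of_addVertex_adj hx hq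
    simp only [Finset.mem_insert, Finset.mem_singleton] at this
    rcases this with rfl | rfl | rfl
    exacts [Or.inr (G2.edge_vert hax), Or.inr (G2.edge_vert hbx), Or.inl rfl]
  · have := mem_of_addVertex_adj hc hp
    simp only [Finset.mem_insert, Finset.mem_singleton] at this
    rcases this with rfl | rfl | rfl
    exacts [Or.inr (G1.edge_vert hab1), Or.inr (G1.edge_vert hbc), Or.inl rfl]

end Gluing

theorem glue_along_edge_planar_3trees_general (G1 G2 : FGraph) (h1 : IsKTree 3 G1)
    (h2 : IsKTree 3 G2) (a b c x : ℕ)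
    (hinter : G1.verts ∩ G2.verts = {a, b}) (hab : a ≠ b)
    (hab1 : G1.Adj a b) (hab2 : G2.Adj a b)
    (hf1 : IsFaceTriangle G1 a b c) (hf2 : IsFaceTriangle G2 a b x)
    (hc : c ∉ G2.verts) (hx : x ∉ G1.verts) :
    IsKTree 3 (addEdge (G1 ⊔ G2) x c) ∧ Planar (addEdge (G1 ⊔ G2) x c) := by
  obtain ⟨-, hbc, hac, hW1⟩ := hf1
  obtain ⟨-, hbx, hax, hW2⟩ := hf2
  rw [addEdge_sup_eq_addVertex_sup (G1.edge_vert hac.symm) hax hbx]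
  refine ⟨isKTree_addVertex_sup h1 h2 hinter hab hab1 hbc hac hab2 hbx hax hc hx, ?_⟩
  rw [addVertex_sup_eq_addVertex_sup_addVertex hbc hac hab2 hbx hax]
  exact planar_addVertex_sup_addVertex hinter hab1 hbc hac hab2 hbx hax hc hx (hW1 x hx)
    (hW2 c hc)

theorem glue_along_edge_planar_3trees (G1 G2 : FGraph) (h1 : IsKTree 3 G1)
    (h2 : IsKTree 3 G2) (hp1 : Planar G1) (hp2 : Planar G2) (a b c x : ℕ)
    (hinter : G1.verts ∩ G2.verts = {a, b}) (hab : a ≠ b)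
    (hab1 : G1.Adj a b) (hab2 : G2.Adj a b)
    (hf1 : IsFaceTriangle G1 a b c) (hf2 : IsFaceTriangle G2 a b x)
    (hc : c ∉ G2.verts) (hx : x ∉ G1.verts) :
    IsKTree 3 (addEdge (G1 ⊔ G2) x c) ∧ Planar (addEdge (G1 ⊔ G2) x c) :=
  glue_along_edge_planar_3trees_general G1 G2 h1 h2 a b c x hinter hab hab1 hab2 hf1 hf2 hc hx
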